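/- arXiv:2111.14579 — 3 statements merged into one kernel-verified Lean document; each statement's English description precedes it below -/
import Mathlib

section
/- Let V be a finite type (Fintype V) and w : List V a list of visited nodes such that the list of its consecutive pairs, w.zip w.tail, has no duplicate entries (List.Nodup). Then every node v : V occurs in w at most Fintype.card V + 1 times: w.count v ≤ Fintype.card V + 1. -/
lemma map_fst_zip_tail {V : Type*} (w : List V) :
    (w.zip w.tail).map Prod.fst = w.dropLast := by
  match w with
  | [] => simp
  | [a] => simp
  | a :: b :: t =>
    simp only [List.tail_cons, List.zip_cons_cons, List.map_cons, List.dropLast_cons₂]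
    congr 1
    exact map_fst_zip_tail (b :: t)

theorem stmt_5 {V : Type*} [Fintype V] [DecidableEq V] (w : List V)
    (h : (w.zip w.tail).Nodup) :
    ∀ v : V, w.count v ≤ Fintype.card V + 1 := by
  intro v
  rcases w.eq_nil_or_concat with rfl | ⟨l, a, rfl⟩
  · simp
  simp only [List.concat_eq_append] at h ⊢
  have hdrop : (l ++ [a]).dropLast = l := by simp
  have hcount : (l ++ [a]).count v ≤ l.count v + 1 := by
    rw [List.count_append]
    have : List.count v [a] ≤ 1 := by simp [List.count_cons]; split <;> simp
    omega
  refine hcount.trans (Nat.add_le_add_right ?_ 1)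
  -- l.count v ≤ Fintype.card V
  have hmap : ((l ++ [a]).zip (l ++ [a]).tail).map Prod.fst = l := by
    rw [map_fst_zip_tail, hdrop]
  set z := (l ++ [a]).zip (l ++ [a]).tail with hz
  have hfilter : (z.filter (fun p => p.1 = v)).length = l.count v := by
    rw [← hmap, List.count, List.countP_map, List.countP_eq_length_filter]
    rfl
  rw [← hfilter]
  have hnodup : (z.filter (fun p => p.1 = v)).Nodup := h.filter _
  have hsnd : ((z.filter (fun p => p.1 = v)).map Prod.snd).Nodup := by
    refine hnodup.map_on ?_
    intro x hx y hy hxy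
    have hx1 : x.1 = v := by simpa using (List.of_mem_filter hx)
    have hy1 : y.1 = v := by simpa using (List.of_mem_filter hy)
    exact Prod.ext (hx1.trans hy1.symm) hxy
  have := hsnd.length_le_card
  simpa using this
end

section
/- Let V be a finite type (Fintype V), R : V → V → Prop a directed edge relation, and w : List V a nonempty list with List.Chain' R w. Then there exists a list p : List V such that p is nonempty, List.Chain' R p, List.Nodup p, p has the same head and last element as w, every consecutive pair of p is a consecutive pair of w, and moreover p.length ≤ w.length and p.length ≤ Fintype.card V. -/
private lemma pairs_cons {V : Type*} {ab : V × V} {l : List V} {h : V}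
    (hm : ab ∈ l.zip l.tail) : ab ∈ (h :: l).zip l := by
  cases l with
  | nil => simp at hm
  | cons u t => simpa using Or.inr (by simpa using hm)

private lemma pairs_suffix {V : Type*} {ab : V × V} :
    ∀ (r l : List V), ab ∈ l.zip l.tail → ab ∈ (r ++ l).zip (r ++ l).tail := by
  intro r
  induction r with
  | nil => simpa using fun l h => h
  | cons h r ih =>
    intro l hm
    have := ih l hm
    simpa using pairs_cons this

private lemma pairs_prefix {V : Type*} {ab : V × V} :
    ∀ (l r : List V), ab ∈ l.zip l.tail → ab ∈ (l ++ r).zip (l ++ r).tail := by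
  intro l
  induction l with
  | nil => simp
  | cons u l ih =>
    intro r hm
    cases l with
    | nil => simp at hm
    | cons v t =>
      simp only [List.cons_append, List.zip_cons_cons, List.tail_cons, List.mem_cons] at hm ⊢
      rcases hm with h | h
      · exact Or.inl h
      · exact Or.inr (by simpa using ih r (by simpa using h))

private lemma pairs_split {V : Type*} {ab : V × V} :
    ∀ (s : List V) (u : V) (t : List V),
      ab ∈ (s ++ u :: t).zip (s ++ u :: t).tail →
      ab ∈ (s ++ [u]).zip (s ++ [u]).tail ∨ ab ∈ (u :: t).zip t := by
  intro s
  induction s with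
  | nil => intro u t hm; exact Or.inr (by simpa using hm)
  | cons h s ih =>
    intro u t hm
    cases s with
    | nil =>
      simp only [List.nil_append, List.cons_append, List.zip_cons_cons, List.tail_cons,
        List.mem_cons] at hm ⊢
      rcases hm with h1 | h1
      · exact Or.inl (by simp [h1])
      · exact Or.inr h1
    | cons h' s' =>
      simp only [List.cons_append, List.zip_cons_cons, List.tail_cons, List.mem_cons] at hm
      rcases hm with h1 | h1
      · exact Or.inl (by simp [h1])
      · rcases ih u t (by simpa using h1) with h2 | h2
        · exact Or.inl (by simpa using pairs_cons h2)
        · exact Or.inr h2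

private lemma exists_dup_split {V : Type*} {l : List V} (h : ¬l.Nodup) :
    ∃ x a b c, l = a ++ x :: (b ++ x :: c) := by
  obtain ⟨x, hx⟩ := List.exists_duplicate_iff_not_nodup.2 h
  refine ⟨x, ?_⟩
  clear h
  induction hx with
  | @cons_mem l hm =>
    obtain ⟨b, c, rfl⟩ := List.append_of_mem hm
    exact ⟨[], b, c, rfl⟩
  | @cons_duplicate y l _ ih =>
    obtain ⟨a, b, c, rfl⟩ := ih
    exact ⟨y :: a, b, c, rfl⟩

private lemma main_aux {V : Type*} [Fintype V] (R : V → V → Prop) :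
    ∀ (n : ℕ) (w : List V), w.length ≤ n → w ≠ [] → List.Chain' R w →
    ∃ p : List V, p ≠ [] ∧ List.Chain' R p ∧ List.Nodup p ∧
      p.head? = w.head? ∧ p.getLast? = w.getLast? ∧
      (∀ ab ∈ p.zip p.tail, ab ∈ w.zip w.tail) ∧
      p.length ≤ w.length := by
  intro n
  induction n with
  | zero => intro w hn hne; simp [List.length_eq_zero_iff.mp (Nat.le_zero.mp hn)] at hne
  | succ n ih =>
    intro w hn hne hchain
    by_cases hnd : w.Nodup
    · exact ⟨w, hne, hchain, hnd, rfl, rfl, fun ab h => h, le_rfl⟩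
    · obtain ⟨x, a, b, c, rfl⟩ := exists_dup_split hnd
      set w : List V := a ++ x :: (b ++ x :: c) with hw
      have hlen : (a ++ x :: c).length < w.length := by simp [hw]
      -- chain for shortcut
      have hca : List.Chain' R a := hchain.prefix ⟨x :: (b ++ x :: c), rfl⟩
      have hcxc : List.Chain' R (x :: c) :=
        hchain.suffix ⟨a ++ x :: b, by simp [hw]⟩
      have hlink : ∀ y ∈ a.getLast?, ∀ z ∈ (x :: c).head?, R y z := by
        intro y hy z hz
        simp only [List.head?_cons, Option.mem_def, Option.some.injEq] at hz
        subst hz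
        have := (List.isChain_append.1 hchain).2.2
        exact this y hy x (by simp)
      have hchain' : List.Chain' R (a ++ x :: c) := List.isChain_append.2 ⟨hca, hcxc, hlink⟩
      have hne' : (a ++ x :: c) ≠ [] := by simp
      obtain ⟨p, hpne, hpc, hpnd, hph, hpl, hpp, hplen⟩ :=
        ih (a ++ x :: c) (by omega) hne' hchain'
      refine ⟨p, hpne, hpc, hpnd, ?_, ?_, ?_, ?_⟩
      · rw [hph]; cases a <;> simp [hw]
      · rw [hpl, hw, List.getLast?_append_of_ne_nil _ (l₂ := x :: c) (by simp),
          show a ++ x :: (b ++ x :: c) = (a ++ x :: b) ++ (x :: c) by simp,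
          List.getLast?_append_of_ne_nil _ (l₂ := x :: c) (by simp)]
      · intro ab hab
        rcases pairs_split a x c (hpp ab hab) with h1 | h1
        · have := pairs_prefix (a ++ [x]) (b ++ x :: c) h1
          simpa [hw] using this
        · have := pairs_suffix (a ++ x :: b) (x :: c) (by simpa using h1)
          simpa [hw] using this
      · omega

theorem stmt_9 {V : Type*} [Fintype V] (R : V → V → Prop) (w : List V)
    (hw : w ≠ []) (hchain : List.Chain' R w) :
    ∃ p : List V, p ≠ [] ∧ List.Chain' R p ∧ List.Nodup p ∧
      p.head? = w.head? ∧ p.getLast? = w.getLast? ∧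
      (∀ ab ∈ p.zip p.tail, ab ∈ w.zip w.tail) ∧
      p.length ≤ w.length ∧ p.length ≤ Fintype.card V := by
  obtain ⟨p, h1, h2, h3, h4, h5, h6, h7⟩ := main_aux R w.length w le_rfl hw hchain
  exact ⟨p, h1, h2, h3, h4, h5, h6, h7, h3.length_le_card⟩
end

section
/- Let V be a type, F : V → V → V an inport-aware forwarding function, and define step : V × V → V × V by step (u, v) = (v, F v u). Fix an initial directed link e : V × V, a destination t : V, and n : ℕ with (step^[n] e).2 = t. Then there exists a list p : List V such that p has no duplicate entries (List.Nodup p), p is nonempty, the head of p is e.1, the last element of p is t, and every consecutive pair (a, b) of p (element of p.zip p.tail) satisfies ∃ i ≤ n, step^[i] e = (a, b). -/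
/-!
The FRR route started at `e` visits the nodes `e.1, e.2, …, t`, and, since every forwarding step
leaves from the node the previous link entered, consecutive nodes of this walk are exactly the
links `step^[i] e` with `i ≤ n`. ShortCut is loop erasure: whenever the walk returns to a node,
the cycle in between is cut out. What remains is a path without repeated nodes from `e.1` to `t`
whose links all occur in the walk.
-/

namespace List

variable {α : Type*} {R : α → α → Prop}

theorem isChain_iff_forall_mem_zip_tail {l : List α} :
    IsChain R l ↔ ∀ ab ∈ l.zip l.tail, R ab.1 ab.2 := by
  induction l using twoStepInduction with
  | nil | singleton => simp
  | cons_cons a b l _ ih => simp [ih]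

theorem exists_nodup_isChain_of_isChain :
    ∀ {l : List α}, IsChain R l →
      ∃ p : List α, p.Nodup ∧ p.head? = l.head? ∧ p.getLast? = l.getLast? ∧ IsChain R p
  | [], _ => ⟨[], nodup_nil, rfl, rfl, .nil⟩
  | a :: l, hl => by
    obtain ⟨hhead, hl⟩ := isChain_cons.1 hl
    obtain ⟨p, hnd, hp_head, hp_last, hp⟩ := exists_nodup_isChain_of_isChain hl
    by_cases ha : a ∈ p
    · -- `a` closes a cycle: keep only the part of `p` from `a` on.
      obtain ⟨s, u, rfl⟩ := append_of_mem ha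
      have hsuffix : a :: u <:+ s ++ a :: u := suffix_append s _
      refine ⟨a :: u, hnd.sublist hsuffix.sublist, rfl, ?_, hp.suffix hsuffix⟩
      obtain ⟨b, l, rfl⟩ : ∃ b l', l = b :: l' :=
        ne_nil_iff_exists_cons.1 (by rintro rfl; simp at hp_head)
      rw [getLast?_cons_cons, ← hp_last, getLast?_append, getLast?_cons]
      simp
    · refine ⟨a :: p, nodup_cons.2 ⟨ha, hnd⟩, rfl, by rw [getLast?_cons, getLast?_cons, hp_last],
        isChain_cons.2 ⟨fun b hb => hhead b (hp_head ▸ hb), hp⟩⟩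

end List

section

variable {V : Type*} (step : V × V → V × V)

def forwardingWalk (e : V × V) (n : ℕ) : List V :=
  (List.range (n + 2)).map fun i => (step^[i] e).1

variable {step}

theorem isChain_forwardingWalk (hlink : ∀ x, (step x).1 = x.2) (e : V × V) (n : ℕ) :
    (forwardingWalk step e n).IsChain fun a b => ∃ i ≤ n, step^[i] e = (a, b) := by
  refine (List.isChain_map _).2 <| (List.isChain_range_succ _ _).2 fun m hm => ⟨m, by omega, ?_⟩
  rw [Function.iterate_succ_apply', hlink]

theorem head?_forwardingWalk (e : V × V) (n : ℕ) :
    (forwardingWalk step e n).head? = some e.1 := by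
  simp [forwardingWalk, List.head?_range]

theorem getLast?_forwardingWalk (hlink : ∀ x, (step x).1 = x.2) (e : V × V) (n : ℕ) :
    (forwardingWalk step e n).getLast? = some (step^[n] e).2 := by
  simp [forwardingWalk, List.getLast?_range, Function.iterate_succ_apply', hlink]

end

theorem stmt_10 {V : Type*} (F : V → V → V)
    (step : V × V → V × V) (hstep : ∀ u v : V, step (u, v) = (v, F v u))
    (e : V × V) (t : V) (n : ℕ) (hn : (step^[n] e).2 = t) :
    ∃ p : List V, List.Nodup p ∧ p ≠ [] ∧
      p.head? = some e.1 ∧ p.getLast? = some t ∧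
      ∀ ab ∈ p.zip p.tail, ∃ i ≤ n, step^[i] e = ab := by
  have hlink : ∀ x, (step x).1 = x.2 := fun ⟨u, v⟩ => by rw [hstep]
  obtain ⟨p, hnd, hhead, hlast, hchain⟩ :=
    List.exists_nodup_isChain_of_isChain (isChain_forwardingWalk hlink e n)
  rw [head?_forwardingWalk] at hhead
  rw [getLast?_forwardingWalk hlink, hn] at hlast
  exact ⟨p, hnd, by rintro rfl; simp at hhead, hhead, hlast,
    List.isChain_iff_forall_mem_zip_tail.1 hchain⟩
end
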